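/- For any ν-calculus expression N1 = (X1, X1⁰, Δ1) over a finite alphabet Σ there exists a ν-calculus expression N2 = (X2, X2⁰, Δ2) in normal form with ⟦N1⟧ = ⟦N2⟧; that is, every Δ2(x) has the form ⋀_{i∈I}(⋁_{j∈Ji} ⟨a_ij⟩x_ij) ∧ ⋀_{a∈Σ}[a](⋁_{j∈Ja} y_{a,j}) for finite (possibly empty) index sets, and additionally for all i ∈ I and j ∈ Ji there exists j' ∈ J_{a_ij} with x_ij ≤th y_{a_ij,j'}. -/

import Mathlib

open Set

/-- A labeled transition system over alphabet `A` with state space `S`. -/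
structure LTS (A : Type) (S : Type) where
  init : Set S
  trans : Set (S × A × S)

/-- A disjunctive modal transition system. -/
structure DMTS (A : Type) (S : Type) where
  init : Set S
  may : Set (S × A × S)
  must : Set (S × Set (A × S))

/-- The DMTS consistency condition: must-transitions are backed by may-transitions. -/
def DMTS.Consistent {A S : Type} (D : DMTS A S) : Prop :=
  ∀ s N, (s, N) ∈ D.must → ∀ a t, (a, t) ∈ N → (s, a, t) ∈ D.may

/-- An LTS viewed as a DMTS implementation. -/
def LTS.toDMTS {A S : Type} (I : LTS A S) : DMTS A S :=
  ⟨I.init, I.trans, {p | ∃ a t, (p.1, a, t) ∈ I.trans ∧ p.2 = {(a, t)}}⟩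

/-- `R` is a modal refinement between DMTS. -/
def IsDMTSRef {A S1 S2 : Type} (D1 : DMTS A S1) (D2 : DMTS A S2)
    (R : Set (S1 × S2)) : Prop :=
  ∀ s1 s2, (s1, s2) ∈ R →
    (∀ a t1, (s1, a, t1) ∈ D1.may → ∃ t2, (s2, a, t2) ∈ D2.may ∧ (t1, t2) ∈ R) ∧
    (∀ N2, (s2, N2) ∈ D2.must → ∃ N1, (s1, N1) ∈ D1.must ∧
      ∀ a t1, (a, t1) ∈ N1 → ∃ t2, (a, t2) ∈ N2 ∧ (t1, t2) ∈ R)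

/-- DMTS modal refinement `D1 ≤m D2`. -/
def DMTS.Refines {A S1 S2 : Type} (D1 : DMTS A S1) (D2 : DMTS A S2) : Prop :=
  ∃ R, IsDMTSRef D1 D2 R ∧ ∀ s1 ∈ D1.init, ∃ s2 ∈ D2.init, (s1, s2) ∈ R

/-- An LTS `I` is an implementation of the DMTS `D`, i.e. `I ∈ ⟦D⟧`. -/
def DMTS.Sat {A S T : Type} (D : DMTS A S) (I : LTS A T) : Prop :=
  DMTS.Refines I.toDMTS D

/-- DMTS thorough refinement `D1 ≤th D2`, i.e. `⟦D1⟧ ⊆ ⟦D2⟧`. -/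
def DMTS.ThRefines {A S1 S2 : Type} (D1 : DMTS A S1) (D2 : DMTS A S2) : Prop :=
  ∀ (T : Type) [Fintype T] (I : LTS A T), D1.Sat I → D2.Sat I

/-- The DMTS `D` with `s` as the only initial state. -/
def DMTS.atState {A S : Type} (D : DMTS A S) (s : S) : DMTS A S :=
  ⟨{s}, D.may, D.must⟩

/-- Thorough refinement between states of a DMTS: `t' ≤th t`. -/
def DMTS.stateThLe {A S : Type} (D : DMTS A S) (t' t : S) : Prop :=
  (D.atState t').ThRefines (D.atState t)

/-- The may-completion `mc(D)` of a DMTS. -/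
def DMTS.mc {A S : Type} (D : DMTS A S) : DMTS A S :=
  ⟨D.init, {p | ∃ t, (p.1, p.2.1, t) ∈ D.may ∧ D.stateThLe p.2.2 t}, D.must⟩

/-- A (non-deterministic) acceptance automaton. -/
structure AA (A : Type) (S : Type) where
  init : Set S
  Tran : S → Set (Set (A × S))

/-- `R` is a modal refinement between transition-constraint assignments
(shared by acceptance automata and `L`-expressions). -/
def IsAARef {A S1 S2 : Type} (T1 : S1 → Set (Set (A × S1)))
    (T2 : S2 → Set (Set (A × S2))) (R : Set (S1 × S2)) : Prop :=
  ∀ s1 s2, (s1, s2) ∈ R → ∀ M1 ∈ T1 s1, ∃ M2 ∈ T2 s2,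
    (∀ a t1, (a, t1) ∈ M1 → ∃ t2, (a, t2) ∈ M2 ∧ (t1, t2) ∈ R) ∧
    (∀ a t2, (a, t2) ∈ M2 → ∃ t1, (a, t1) ∈ M1 ∧ (t1, t2) ∈ R)

/-- AA modal refinement `A1 ≤m A2`. -/
def AA.Refines {A S1 S2 : Type} (A1 : AA A S1) (A2 : AA A S2) : Prop :=
  ∃ R, IsAARef A1.Tran A2.Tran R ∧ ∀ s1 ∈ A1.init, ∃ s2 ∈ A2.init, (s1, s2) ∈ R

/-- An LTS viewed as an AA implementation. -/
def LTS.toAA {A S : Type} (I : LTS A S) : AA A S :=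
  ⟨I.init, fun s => {{p | (s, p.1, p.2) ∈ I.trans}}⟩

/-- An LTS `I` is an implementation of the AA `Aut`, i.e. `I ∈ ⟦Aut⟧`. -/
def AA.Sat {A S T : Type} (Aut : AA A S) (I : LTS A T) : Prop :=
  AA.Refines I.toAA Aut

/-- Formulae of the hybrid modal logic `L(X)`. -/
inductive LForm (A : Type) (X : Type) where
  | tt : LForm A X
  | ff : LForm A X
  | dia : A → X → LForm A X
  | neg : LForm A X → LForm A X
  | and : LForm A X → LForm A X → LForm A X

/-- Definable disjunction in `L(X)`. -/
def LForm.lor {A X : Type} (φ ψ : LForm A X) : LForm A X :=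
  LForm.neg (LForm.and (LForm.neg φ) (LForm.neg ψ))

/-- Semantics of `L(X)`: a set of subsets of `A × X`. -/
def lsem {A X : Type} : LForm A X → Set (Set (A × X))
  | LForm.tt => Set.univ
  | LForm.ff => ∅
  | LForm.dia a x => {M | (a, x) ∈ M}
  | LForm.neg φ => (lsem φ)ᶜ
  | LForm.and φ ψ => lsem φ ∩ lsem ψ

/-- An `L`-expression. -/
structure LExpr (A : Type) (X : Type) where
  init : Set X
  Phi : X → LForm A X

/-- Modal refinement of `L`-expressions `E1 ≤m E2`. -/
def LExpr.Refines {A X1 X2 : Type} (E1 : LExpr A X1) (E2 : LExpr A X2) : Prop :=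
  ∃ R, IsAARef (fun x => lsem (E1.Phi x)) (fun x => lsem (E2.Phi x)) R ∧
    ∀ x1 ∈ E1.init, ∃ x2 ∈ E2.init, (x1, x2) ∈ R

/-- An LTS `I` is an implementation of the `L`-expression `E`, i.e. `I ∈ ⟦E⟧`. -/
def LExpr.Sat {A X T : Type} (E : LExpr A X) (I : LTS A T) : Prop :=
  ∃ R, IsAARef (LTS.toAA I).Tran (fun x => lsem (E.Phi x)) R ∧
    ∀ s ∈ I.init, ∃ x ∈ E.init, (s, x) ∈ R

instance {α : Type} [Finite α] : Finite (Set α) :=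
  Finite.of_equiv (α → Prop) (Equiv.refl _)

/-- An enumeration of a set over a finite type. -/
noncomputable def setList {α : Type} [Finite α] (s : Set α) : List α :=
  s.toFinite.toFinset.toList

/-- Finite syntactic conjunction. -/
def listAnd {A X : Type} (l : List (LForm A X)) : LForm A X :=
  l.foldr LForm.and LForm.tt

/-- Finite syntactic disjunction. -/
def listOr {A X : Type} (l : List (LForm A X)) : LForm A X :=
  l.foldr LForm.lor LForm.ff

/-- The translation `bl` from acceptance automata to `L`-expressions:
`Φ(s) = ⋁_{M ∈ Tran(s)} ( ⋀_{(a,t)∈M} ⟨a⟩t ∧ ⋀_{(b,u)∉M} ¬⟨b⟩u )`. -/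
noncomputable def bl {A S : Type} [Finite A] [Finite S] (Aut : AA A S) : LExpr A S :=
  ⟨Aut.init, fun s => listOr ((setList (Aut.Tran s)).map fun M =>
    LForm.and
      (listAnd ((setList M).map fun p => LForm.dia p.1 p.2))
      (listAnd ((setList Mᶜ).map fun p => LForm.neg (LForm.dia p.1 p.2))))⟩

/-- The translation `lb` from `L`-expressions to acceptance automata. -/
def lb {A X : Type} (E : LExpr A X) : AA A X :=
  ⟨E.init, fun x => lsem (E.Phi x)⟩

/-- The translation `db` from DMTS to acceptance automata. -/
def db {A S : Type} (D : DMTS A S) : AA A S :=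
  ⟨D.init, fun s => {M | (∀ a t, (a, t) ∈ M → (s, a, t) ∈ D.may) ∧
      ∀ N, (s, N) ∈ D.must → (N ∩ M).Nonempty}⟩

/-- The state space of the translation `bd`. -/
def bdState {A S : Type} (Aut : AA A S) : Type :=
  {M : Set (A × S) // ∃ s, M ∈ Aut.Tran s}

/-- Must-transitions of `bd(Aut)`. -/
def bdMust {A S : Type} (Aut : AA A S) : Set (bdState Aut × Set (A × bdState Aut)) :=
  {p | ∃ a t, (a, t) ∈ p.1.val ∧ p.2 = {q | q.1 = a ∧ q.2.val ∈ Aut.Tran t}}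

/-- The translation `bd` from acceptance automata to DMTS. -/
def bd {A S : Type} (Aut : AA A S) : DMTS A (bdState Aut) :=
  ⟨{M | ∃ s ∈ Aut.init, M.val ∈ Aut.Tran s},
   {p | ∃ N, (p.1, N) ∈ bdMust Aut ∧ (p.2.1, p.2.2) ∈ N},
   bdMust Aut⟩

/-- Hennessy-Milner formulae `HML(X)`. -/
inductive HML (A : Type) (X : Type) where
  | tt : HML A X
  | ff : HML A X
  | var : X → HML A X
  | dia : A → HML A X → HML A X
  | box : A → HML A X → HML A X
  | and : HML A X → HML A X → HML A X
  | or : HML A X → HML A X → HML A X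

/-- Semantics of `HML(X)` over an LTS, relative to an assignment. -/
def hsem {A X S : Type} (I : LTS A S) : HML A X → (X → Set S) → Set S
  | HML.tt, _ => Set.univ
  | HML.ff, _ => ∅
  | HML.var x, σ => σ x
  | HML.dia a φ, σ => {s | ∃ s', (s, a, s') ∈ I.trans ∧ s' ∈ hsem I φ σ}
  | HML.box a φ, σ => {s | ∀ s', (s, a, s') ∈ I.trans → s' ∈ hsem I φ σ}
  | HML.and φ ψ, σ => hsem I φ σ ∩ hsem I ψ σ
  | HML.or φ ψ, σ => hsem I φ σ ∪ hsem I ψ σ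

/-- The greatest (pre)fixed point semantics of a declaration `Δ`. -/
def hgfp {A X S : Type} (I : LTS A S) (Δ : X → HML A X) (x : X) : Set S :=
  {s | ∃ σ : X → Set S, (∀ y, σ y ⊆ hsem I (Δ y) σ) ∧ s ∈ σ x}

/-- A ν-calculus expression. -/
structure NuExpr (A : Type) (X : Type) where
  init : Set X
  decl : X → HML A X

/-- `I ⊨ N` for a ν-calculus expression. -/
def NuExpr.Models {A X S : Type} (N : NuExpr A X) (I : LTS A S) : Prop :=
  ∀ s0 ∈ I.init, ∃ x0 ∈ N.init, s0 ∈ hgfp I N.decl x0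

/-- A ν-calculus expression in normal form, given by its data `◇(x)` and `□ᵃ(x)`:
`Δ(x) = ⋀_{N∈◇(x)}(⋁_{(a,y)∈N} ⟨a⟩y) ∧ ⋀_{a}[a](⋁_{y∈□ᵃ(x)} y)`. -/
structure NF (A : Type) (X : Type) where
  init : Set X
  dia : X → Set (Set (A × X))
  box : X → A → Set X

/-- Semantics of the normal-form formula `Δ(x)` relative to an assignment `σ`. -/
def nfSem {A X S : Type} (n : NF A X) (I : LTS A S) (σ : X → Set S) (x : X) : Set S :=
  {s | (∀ N ∈ n.dia x, ∃ p ∈ N, ∃ s', (s, p.1, s') ∈ I.trans ∧ s' ∈ σ p.2) ∧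
       (∀ a s', (s, a, s') ∈ I.trans → ∃ y ∈ n.box x a, s' ∈ σ y)}

/-- The greatest (pre)fixed point semantics of a normal-form declaration. -/
def nfGfp {A X S : Type} (n : NF A X) (I : LTS A S) (x : X) : Set S :=
  {s | ∃ σ : X → Set S, (∀ y, σ y ⊆ nfSem n I σ y) ∧ s ∈ σ x}

/-- `I ⊨ N` for a normal-form ν-calculus expression. -/
def NF.Models {A X S : Type} (n : NF A X) (I : LTS A S) : Prop :=
  ∀ s0 ∈ I.init, ∃ x0 ∈ n.init, s0 ∈ nfGfp n I x0

/-- Thorough refinement between variables of a normal-form expression: `x ≤th y`. -/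
def NF.varThLe {A X : Type} (n : NF A X) (x y : X) : Prop :=
  ∀ (S : Type) [Fintype S] (I : LTS A S),
    NF.Models ⟨{x}, n.dia, n.box⟩ I → NF.Models ⟨{y}, n.dia, n.box⟩ I

/-- `R` is a (ν-calculus) modal refinement between normal-form expressions. -/
def IsNFRef {A X1 X2 : Type} (n1 : NF A X1) (n2 : NF A X2)
    (R : Set (X1 × X2)) : Prop :=
  ∀ x1 x2, (x1, x2) ∈ R →
    (∀ a, ∀ y1 ∈ n1.box x1 a, ∃ y2 ∈ n2.box x2 a, (y1, y2) ∈ R) ∧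
    (∀ N2 ∈ n2.dia x2, ∃ N1 ∈ n1.dia x1,
      ∀ a y1, (a, y1) ∈ N1 → ∃ y2, (a, y2) ∈ N2 ∧ (y1, y2) ∈ R)

/-- ν-calculus modal refinement `N1 ≤m N2` (normal forms). -/
def NF.Refines {A X1 X2 : Type} (n1 : NF A X1) (n2 : NF A X2) : Prop :=
  ∃ R, IsNFRef n1 n2 R ∧ ∀ x1 ∈ n1.init, ∃ x2 ∈ n2.init, (x1, x2) ∈ R

/-- `R` is a modal-thorough refinement between normal-form expressions. -/
def IsNFMTRef {A X1 X2 : Type} (n1 : NF A X1) (n2 : NF A X2)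
    (R : Set (X1 × X2)) : Prop :=
  ∀ x1 x2, (x1, x2) ∈ R →
    (∀ a, ∀ y1 ∈ n1.box x1 a, ∀ y1', n1.varThLe y1' y1 →
      ∃ y2 ∈ n2.box x2 a, ∃ y2', n2.varThLe y2' y2 ∧ (y1', y2') ∈ R) ∧
    (∀ N2 ∈ n2.dia x2, ∃ N1 ∈ n1.dia x1,
      ∀ a y1, (a, y1) ∈ N1 → ∃ y2, (a, y2) ∈ N2 ∧ (y1, y2) ∈ R)

/-- ν-calculus modal-thorough refinement `N1 ≤mt N2`. -/
def NF.MTRefines {A X1 X2 : Type} (n1 : NF A X1) (n2 : NF A X2) : Prop :=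
  ∃ R, IsNFMTRef n1 n2 R ∧ ∀ x1 ∈ n1.init, ∃ x2 ∈ n2.init, (x1, x2) ∈ R

/-- Mutual ν-calculus modal refinement `N1 ≡m N2`. -/
def NF.MEquiv {A X1 X2 : Type} (n1 : NF A X1) (n2 : NF A X2) : Prop :=
  n1.Refines n2 ∧ n2.Refines n1

/-- The characteristic-formula translation `ddh` from DMTS to normal-form expressions. -/
def ddh {A S : Type} (D : DMTS A S) : NF A S :=
  ⟨D.init, fun s => {N | (s, N) ∈ D.must}, fun s a => {t | (s, a, t) ∈ D.may}⟩

/-- The (old) semantic translation `hdt` from normal-form expressions to DMTS. -/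
def hdt {A X : Type} (n : NF A X) : DMTS A X :=
  ⟨n.init, {p | ∃ y ∈ n.box p.1 p.2.1, n.varThLe p.2.2 y}, {p | p.2 ∈ n.dia p.1}⟩

/-- The (new) syntactic translation `hd` from normal-form expressions to DMTS. -/
def hd {A X : Type} (n : NF A X) : DMTS A X :=
  ⟨n.init, {p | p.2.2 ∈ n.box p.1 p.2.1}, {p | p.2 ∈ n.dia p.1}⟩

/-- The embedding of LTS into normal-form ν-calculus expressions. -/
def LTS.toNF {A S : Type} (I : LTS A S) : NF A S :=
  ⟨I.init, fun s => {M | ∃ a t, (s, a, t) ∈ I.trans ∧ M = {(a, t)}},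
   fun s a => {t | (s, a, t) ∈ I.trans}⟩

/-- Disjunction of normal-form ν-calculus expressions (on disjoint variable sets). -/
def nfOr {A X1 X2 : Type} (n1 : NF A X1) (n2 : NF A X2) : NF A (X1 ⊕ X2) where
  init := Sum.inl '' n1.init ∪ Sum.inr '' n2.init
  dia := fun x => match x with
    | Sum.inl x1 => (fun N => (fun p : A × X1 => (p.1, Sum.inl p.2)) '' N) '' n1.dia x1
    | Sum.inr x2 => (fun N => (fun p : A × X2 => (p.1, Sum.inr p.2)) '' N) '' n2.dia x2
  box := fun x a => match x with
    | Sum.inl x1 => Sum.inl '' n1.box x1 a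
    | Sum.inr x2 => Sum.inr '' n2.box x2 a

/-- Conjunction of normal-form ν-calculus expressions. -/
def nfAnd {A X1 X2 : Type} (n1 : NF A X1) (n2 : NF A X2) : NF A (X1 × X2) where
  init := n1.init ×ˢ n2.init
  dia := fun x =>
    {M | ∃ N1 ∈ n1.dia x.1, M = {p : A × (X1 × X2) |
      (p.1, p.2.1) ∈ N1 ∧ p.2.1 ∈ n1.box x.1 p.1 ∧ p.2.2 ∈ n2.box x.2 p.1}} ∪
    {M | ∃ N2 ∈ n2.dia x.2, M = {p : A × (X1 × X2) |
      (p.1, p.2.2) ∈ N2 ∧ p.2.1 ∈ n1.box x.1 p.1 ∧ p.2.2 ∈ n2.box x.2 p.1}}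
  box := fun x a => (n1.box x.1 a) ×ˢ (n2.box x.2 a)

/-- The bottom normal-form expression `⊥ = (∅, ∅, ∅)`. -/
def nfBot (A : Type) : NF A Empty :=
  ⟨∅, fun x => x.elim, fun x => x.elim⟩

/-- The top normal-form expression `⊤ = ({s}, {s}, Δ)` with `Δ(s) = tt`. -/
def nfTop (A : Type) : NF A Unit :=
  ⟨{()}, fun _ => ∅, fun _ _ => {()}⟩

/-!
The normal form is a tableau construction over the finite closure of the declaration. Its
variables are sets `Γ` of closure formulae, read as conjunctions. A set is *expanded* if it is
closed under splitting `∧`, choosing a disjunct of `∨`, and unfolding a variable to its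
declaration. A diamond `⟨a⟩φ ∈ Γ` becomes the disjunction of `⟨a⟩Γ'` over all expanded `Γ'`
containing `φ` and every `[a]`-body of `Γ`, `ff ∈ Γ` becomes the empty disjunction, and `[a]`
allows exactly the expanded sets containing every `[a]`-body of `Γ`. A state satisfying `N`
satisfies the normal form via its set of true closure formulae; conversely, the states matched
to an expanded set containing `x` form a post-fixed point for `Δ`. Every diamond successor is
also a box successor, which gives the side condition with `≤th` reflexive.
-/

section Coinduction

variable {ι S : Type}

def unionPostfixed (F : (ι → Set S) → ι → Set S) : ι → Set S :=
  fun x => {s | ∃ σ, σ ≤ F σ ∧ s ∈ σ x}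

theorem unionPostfixed_le {F : (ι → Set S) → ι → Set S} (hF : Monotone F) :
    unionPostfixed F ≤ F (unionPostfixed F) := by
  rintro x s ⟨σ, hσ, hs⟩
  have hσ_le : σ ≤ unionPostfixed F := fun _ _ ht => ⟨σ, hσ, ht⟩
  exact hF hσ_le x (hσ x hs)

end Coinduction

section NormalForm

variable {A X S : Type}

namespace HML

def subformulas : HML A X → Set (HML A X)
  | tt => {tt}
  | ff => {ff}
  | var x => {var x}
  | dia a φ => insert (dia a φ) φ.subformulas
  | box a φ => insert (box a φ) φ.subformulas
  | and φ ψ => insert (and φ ψ) (φ.subformulas ∪ ψ.subformulas)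
  | or φ ψ => insert (or φ ψ) (φ.subformulas ∪ ψ.subformulas)

theorem mem_subformulas_self (φ : HML A X) : φ ∈ φ.subformulas := by
  cases φ <;> simp [subformulas]

theorem finite_subformulas (φ : HML A X) : φ.subformulas.Finite := by
  induction φ with
  | tt | ff | var => exact Set.finite_singleton _
  | dia _ _ ih | box _ _ ih => exact ih.insert _
  | and _ _ ih₁ ih₂ | or _ _ ih₁ ih₂ => exact (ih₁.union ih₂).insert _

theorem subformulas_subset {φ ψ : HML A X} (h : ψ ∈ φ.subformulas) :
    ψ.subformulas ⊆ φ.subformulas := by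
  induction φ with
  | tt | ff | var => rw [Set.mem_singleton_iff.1 h]
  | dia _ _ ih | box _ _ ih =>
    rcases h with rfl | h
    · exact subset_rfl
    · exact (ih h).trans (Set.subset_insert _ _)
  | and _ _ ih₁ ih₂ | or _ _ ih₁ ih₂ =>
    rcases h with rfl | h | h
    · exact subset_rfl
    · exact (ih₁ h).trans (Set.subset_union_left.trans (Set.subset_insert _ _))
    · exact (ih₂ h).trans (Set.subset_union_right.trans (Set.subset_insert _ _))

end HML

def declClosure (Δ : X → HML A X) : Set (HML A X) :=
  Set.range HML.var ∪ ⋃ x, (Δ x).subformulas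

theorem finite_declClosure [Finite X] (Δ : X → HML A X) : (declClosure Δ).Finite :=
  (Set.finite_range _).union (Set.finite_iUnion fun x => (Δ x).finite_subformulas)

theorem decl_mem_declClosure (Δ : X → HML A X) (x : X) : Δ x ∈ declClosure Δ :=
  Or.inr (Set.mem_iUnion.2 ⟨x, (Δ x).mem_subformulas_self⟩)

theorem var_mem_declClosure (Δ : X → HML A X) (x : X) : HML.var x ∈ declClosure Δ :=
  Or.inl ⟨x, rfl⟩

theorem mem_declClosure_of_mem_subformulas {Δ : X → HML A X} {χ φ : HML A X}
    (hχ : χ ∈ declClosure Δ) (h : φ ∈ χ.subformulas) : φ ∈ declClosure Δ := by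
  rcases hχ with ⟨x, rfl⟩ | hχ
  · rw [Set.mem_singleton_iff.1 h]
    exact var_mem_declClosure Δ x
  · obtain ⟨x, hx⟩ := Set.mem_iUnion.1 hχ
    exact Or.inr (Set.mem_iUnion.2 ⟨x, HML.subformulas_subset hx h⟩)

section ImmediateSubformulas

variable {Δ : X → HML A X} {φ ψ : HML A X} {a : A}

theorem mem_declClosure_of_and (h : HML.and φ ψ ∈ declClosure Δ) :
    φ ∈ declClosure Δ ∧ ψ ∈ declClosure Δ :=
  ⟨mem_declClosure_of_mem_subformulas h (by simp [HML.subformulas, HML.mem_subformulas_self]),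
   mem_declClosure_of_mem_subformulas h (by simp [HML.subformulas, HML.mem_subformulas_self])⟩

theorem mem_declClosure_of_or (h : HML.or φ ψ ∈ declClosure Δ) :
    φ ∈ declClosure Δ ∧ ψ ∈ declClosure Δ :=
  ⟨mem_declClosure_of_mem_subformulas h (by simp [HML.subformulas, HML.mem_subformulas_self]),
   mem_declClosure_of_mem_subformulas h (by simp [HML.subformulas, HML.mem_subformulas_self])⟩

theorem mem_declClosure_of_dia (h : HML.dia a φ ∈ declClosure Δ) : φ ∈ declClosure Δ :=
  mem_declClosure_of_mem_subformulas h (by simp [HML.subformulas, HML.mem_subformulas_self])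

theorem mem_declClosure_of_box (h : HML.box a φ ∈ declClosure Δ) : φ ∈ declClosure Δ :=
  mem_declClosure_of_mem_subformulas h (by simp [HML.subformulas, HML.mem_subformulas_self])

end ImmediateSubformulas

def IsExpanded (Δ : X → HML A X) (Γ : Set (HML A X)) : Prop :=
  (∀ φ ψ, HML.and φ ψ ∈ Γ → φ ∈ Γ ∧ ψ ∈ Γ) ∧
  (∀ φ ψ, HML.or φ ψ ∈ Γ → φ ∈ Γ ∨ ψ ∈ Γ) ∧
  (∀ x, HML.var x ∈ Γ → Δ x ∈ Γ)

def boxBodies (Γ : Set (HML A X)) (a : A) : Set (HML A X) :=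
  {ψ | HML.box a ψ ∈ Γ}

def NFVar (Δ : X → HML A X) : Type :=
  {Γ : Set (HML A X) // Γ ⊆ declClosure Δ}

instance [Finite X] (Δ : X → HML A X) : Finite (NFVar Δ) :=
  (finite_declClosure Δ).finite_subsets.to_subtype

def NuExpr.toNF (N : NuExpr A X) : NF A (NFVar N.decl) where
  init := {Γ | IsExpanded N.decl Γ.val ∧ ∃ x ∈ N.init, HML.var x ∈ Γ.val}
  dia Γ :=
    {M | ∃ a φ, HML.dia a φ ∈ Γ.val ∧
      M = {p | p.1 = a ∧ IsExpanded N.decl p.2.val ∧ φ ∈ p.2.val ∧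
        boxBodies Γ.val a ⊆ p.2.val}} ∪
    {M | HML.ff ∈ Γ.val ∧ M = ∅}
  box Γ a := {Γ' | IsExpanded N.decl Γ'.val ∧ boxBodies Γ.val a ⊆ Γ'.val}

theorem NuExpr.toNF_dia_subset_box (N : NuExpr A X) {Γ : NFVar N.decl}
    {M : Set (A × NFVar N.decl)} (hM : M ∈ N.toNF.dia Γ) {a : A} {Γ' : NFVar N.decl}
    (h : (a, Γ') ∈ M) :
    Γ' ∈ N.toNF.box Γ a := by
  rcases hM with ⟨b, φ, -, rfl⟩ | ⟨-, rfl⟩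
  · obtain ⟨rfl, hexp, -, hbox⟩ := h
    exact ⟨hexp, hbox⟩
  · exact absurd h (Set.notMem_empty _)

theorem hsem_mono (I : LTS A S) (φ : HML A X) : Monotone (hsem I φ) := by
  intro σ σ' h
  induction φ with
  | tt | ff => exact subset_rfl
  | var x => exact h x
  | dia a φ ih => rintro s ⟨s', ht, hs⟩; exact ⟨s', ht, ih hs⟩
  | box a φ ih => intro s hs s' ht; exact ih (hs s' ht)
  | and φ ψ ih₁ ih₂ => exact Set.inter_subset_inter ih₁ ih₂
  | or φ ψ ih₁ ih₂ => exact Set.union_subset_union ih₁ ih₂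

theorem hgfp_subset_hsem (I : LTS A S) (Δ : X → HML A X) (x : X) :
    hgfp I Δ x ⊆ hsem I (Δ x) (hgfp I Δ) :=
  unionPostfixed_le (F := fun σ y => hsem I (Δ y) σ)
    (fun _ _ h y => hsem_mono I (Δ y) h) x

theorem nfSem_mono (n : NF A X) (I : LTS A S) : Monotone (nfSem n I) := by
  rintro σ σ' h x s ⟨hdia, hbox⟩
  refine ⟨fun M hM => ?_, fun a s' ht => ?_⟩
  · obtain ⟨p, hp, s', ht, hs⟩ := hdia M hM
    exact ⟨p, hp, s', ht, h _ hs⟩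
  · obtain ⟨y, hy, hs⟩ := hbox a s' ht
    exact ⟨y, hy, h y hs⟩

theorem nfGfp_subset_nfSem (n : NF A X) (I : LTS A S) (x : X) :
    nfGfp n I x ⊆ nfSem n I (nfGfp n I) x :=
  unionPostfixed_le (nfSem_mono n I) x

def conjSem (I : LTS A S) (Δ : X → HML A X) (Γ : Set (HML A X)) : Set S :=
  {s | ∀ φ ∈ Γ, s ∈ hsem I φ (hgfp I Δ)}

def truthSet (I : LTS A S) (Δ : X → HML A X) (s : S) : NFVar Δ :=
  ⟨{φ | φ ∈ declClosure Δ ∧ s ∈ hsem I φ (hgfp I Δ)}, fun _ hφ => hφ.1⟩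

theorem mem_conjSem_truthSet (I : LTS A S) (Δ : X → HML A X) (s : S) :
    s ∈ conjSem I Δ (truthSet I Δ s).val :=
  fun _ hφ => hφ.2

theorem isExpanded_truthSet (I : LTS A S) (Δ : X → HML A X) (s : S) :
    IsExpanded Δ (truthSet I Δ s).val := by
  refine ⟨fun φ ψ ⟨hcl, hs⟩ => ?_, fun φ ψ ⟨hcl, hs⟩ => ?_, fun x ⟨_, hs⟩ => ?_⟩
  · obtain ⟨hφ, hψ⟩ := mem_declClosure_of_and hcl
    exact ⟨⟨hφ, hs.1⟩, ⟨hψ, hs.2⟩⟩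
  · exact hs.imp (fun hs => ⟨(mem_declClosure_of_or hcl).1, hs⟩)
      (fun hs => ⟨(mem_declClosure_of_or hcl).2, hs⟩)
  · exact ⟨decl_mem_declClosure Δ x, hgfp_subset_hsem I Δ x hs⟩

theorem boxBodies_subset_truthSet {I : LTS A S} {Δ : X → HML A X} {Γ : NFVar Δ} {s s' : S}
    {a : A} (hs : s ∈ conjSem I Δ Γ.val) (ht : (s, a, s') ∈ I.trans) :
    boxBodies Γ.val a ⊆ (truthSet I Δ s').val :=
  fun _ hψ => ⟨mem_declClosure_of_box (Γ.2 hψ), hs _ hψ s' ht⟩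

/-- A successor `s'` of a state of `conjSem Γ` is matched by the variable `truthSet s'`. -/
theorem conjSem_subset_nfSem (N : NuExpr A X) (I : LTS A S) (Γ : NFVar N.decl) :
    conjSem I N.decl Γ.val ⊆
      nfSem N.toNF I (fun Γ' => conjSem I N.decl Γ'.val) Γ := by
  intro s hs
  constructor
  · rintro M (⟨a, φ, hφ, rfl⟩ | ⟨hff, -⟩)
    · obtain ⟨s', ht, hs'⟩ := hs _ hφ
      exact ⟨(a, truthSet I N.decl s'),
        ⟨rfl, isExpanded_truthSet I N.decl s', ⟨mem_declClosure_of_dia (Γ.2 hφ), hs'⟩,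
          boxBodies_subset_truthSet hs ht⟩,
        s', ht, mem_conjSem_truthSet I N.decl s'⟩
    · exact absurd (hs _ hff) (Set.notMem_empty s)
  · intro a s' ht
    exact ⟨truthSet I N.decl s',
      ⟨isExpanded_truthSet I N.decl s', boxBodies_subset_truthSet hs ht⟩,
      mem_conjSem_truthSet I N.decl s'⟩

theorem NuExpr.toNF_models_of_models {N : NuExpr A X} {I : LTS A S} (h : N.Models I) :
    N.toNF.Models I := by
  intro s hs
  obtain ⟨x, hx, hsx⟩ := h s hs
  exact ⟨truthSet I N.decl s,
    ⟨isExpanded_truthSet I N.decl s, x, hx, var_mem_declClosure N.decl x, hsx⟩,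
    fun Γ => conjSem I N.decl Γ.val, conjSem_subset_nfSem N I, mem_conjSem_truthSet I N.decl s⟩

def matchedStates (N : NuExpr A X) (I : LTS A S) (x : X) : Set S :=
  {s | ∃ Γ : NFVar N.decl, IsExpanded N.decl Γ.val ∧ HML.var x ∈ Γ.val ∧
    s ∈ nfGfp N.toNF I Γ}

theorem nfGfp_subset_hsem (N : NuExpr A X) (I : LTS A S) (φ : HML A X) {Γ : NFVar N.decl}
    (hΓ : IsExpanded N.decl Γ.val) (hφ : φ ∈ Γ.val) :
    nfGfp N.toNF I Γ ⊆ hsem I φ (matchedStates N I) := by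
  induction φ generalizing Γ with
  | tt => exact fun _ _ => trivial
  | ff =>
    intro s hs
    simpa using (nfGfp_subset_nfSem N.toNF I Γ hs).1 ∅ (Or.inr ⟨hφ, rfl⟩)
  | var x => exact fun s hs => ⟨Γ, hΓ, hφ, hs⟩
  | dia a φ ih =>
    intro s hs
    obtain ⟨⟨b, Γ'⟩, ⟨rfl, hΓ', hφ', -⟩, s', ht, hs'⟩ :=
      (nfGfp_subset_nfSem N.toNF I Γ hs).1 _ (Or.inl ⟨a, φ, hφ, rfl⟩)
    exact ⟨s', ht, ih hΓ' hφ' hs'⟩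
  | box a φ ih =>
    intro s hs s' ht
    obtain ⟨Γ', ⟨hΓ', hbodies⟩, hs'⟩ := (nfGfp_subset_nfSem N.toNF I Γ hs).2 a s' ht
    exact ih hΓ' (hbodies hφ) hs'
  | and φ ψ ih₁ ih₂ =>
    obtain ⟨h₁, h₂⟩ := hΓ.1 φ ψ hφ
    exact fun s hs => ⟨ih₁ hΓ h₁ hs, ih₂ hΓ h₂ hs⟩
  | or φ ψ ih₁ ih₂ =>
    intro s hs
    exact (hΓ.2.1 φ ψ hφ).imp (fun h => ih₁ hΓ h hs) (fun h => ih₂ hΓ h hs)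

theorem NuExpr.models_of_toNF_models {N : NuExpr A X} {I : LTS A S} (h : N.toNF.Models I) :
    N.Models I := by
  intro s hs
  obtain ⟨Γ, ⟨hΓ, x, hx, hxΓ⟩, hsΓ⟩ := h s hs
  refine ⟨x, hx, matchedStates N I, ?_, Γ, hΓ, hxΓ, hsΓ⟩
  rintro y t ⟨Γ', hΓ', hyΓ', ht⟩
  exact nfGfp_subset_hsem N I (N.decl y) hΓ' (hΓ'.2.2 y hyΓ') ht

end NormalForm

theorem nu_calculus_normal_form_general {A : Type}
    {X1 : Type} [Fintype X1] (N1 : NuExpr A X1) :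
    ∃ (X2 : Type) (_ : Fintype X2) (N2 : NF A X2),
      (∀ x, ∀ N ∈ N2.dia x, ∀ a y, (a, y) ∈ N →
        ∃ y' ∈ N2.box x a, N2.varThLe y y') ∧
      ∀ (S : Type) [Fintype S] (I : LTS A S), N1.Models I ↔ N2.Models I :=
  ⟨NFVar N1.decl, Fintype.ofFinite _, N1.toNF,
    fun _ _ hM _ _ h => ⟨_, N1.toNF_dia_subset_box hM h, fun _ _ _ hI => hI⟩,
    fun _ _ _ => ⟨NuExpr.toNF_models_of_models, NuExpr.models_of_toNF_models⟩⟩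

/-- Every ν-calculus expression is semantically equivalent to one
in normal form (including the side condition that every diamond successor is
thoroughly below some box successor). -/
theorem nu_calculus_normal_form {A : Type} [Fintype A]
    {X1 : Type} [Fintype X1] (N1 : NuExpr A X1) :
    ∃ (X2 : Type) (_ : Fintype X2) (N2 : NF A X2),
      (∀ x, ∀ N ∈ N2.dia x, ∀ a y, (a, y) ∈ N →
        ∃ y' ∈ N2.box x a, N2.varThLe y y') ∧
      ∀ (S : Type) [Fintype S] (I : LTS A S), N1.Models I ↔ N2.Models I :=
  nu_calculus_normal_form_general N1
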